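/- Let n, c, r, t, k be natural numbers with k + c ≤ r, k + c ≤ t, and r + t − k ≤ n − c, and let D : {0,1,...,n} → {−1,1} be a predicate. Define G : {0,1,...,c} → {−1,1} by G(i) = D(r + t − 2(k+i)) (note r + t − 2(k+i) ∈ {0,...,n} by the hypotheses). Then the sign-rank of the 2^n × 2^n matrix F(x,y) = D(|x ⊕ y|) (indexed by x, y ∈ {0,1}^n) is at least the sign-rank of the 2^c × 2^c matrix F'(x',y') = G(|x' ∧ y'|) (indexed by x', y' ∈ {0,1}^c). -/

import Mathlib

/-- Hamming weight of a Boolean vector. -/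
def hamW {n : ℕ} (x : Fin n → Bool) : ℕ := (Finset.univ.filter (fun i => x i)).card

/-- Bitwise XOR of Boolean vectors. -/
def bxor {n : ℕ} (x y : Fin n → Bool) : Fin n → Bool := fun i => xor (x i) (y i)

/-- Bitwise AND of Boolean vectors. -/
def band {n : ℕ} (x y : Fin n → Bool) : Fin n → Bool := fun i => x i && y i

/-- Sign-rank of a real sign matrix `F`: the least rank of a real matrix `A`
of the same dimensions all of whose entries are nonzero and have the same sign
as the corresponding entry of `F`. -/
noncomputable def signRank {X Y : Type} [Fintype X] [Fintype Y]
    (F : Matrix X Y ℝ) : ℕ :=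
  sInf {r : ℕ | ∃ A : Matrix X Y ℝ, (∀ x y, 0 < A x y * F x y) ∧ A.rank = r}

/-!
The AND matrix on `{0,1}^c` is, up to relabelling its entries through `D`, a submatrix of the
XOR matrix on `{0,1}^n`, and sign-rank cannot increase when passing to a submatrix. Send
`x' ↦ (x', ¬x', 0, 1^(r-k-c), 0, 0)` and `y' ↦ (y', 0, ¬y', 0, 1^(t-k-c), 0)`. Block by block
the XOR of the images has weight `|x' ⊕ y'| + (c - |x'|) + (c - |y'|) + (r-k-c) + (t-k-c)`, and
`|x' ⊕ y'| = |x'| + |y'| - 2|x' ∧ y'|` turns this into `r + t - 2(k + |x' ∧ y'|)`.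
-/

open Finset

theorem signRank_submatrix_le {X Y X' Y' : Type} [Fintype X] [Fintype Y] [Fintype X']
    [Fintype Y'] (F : Matrix X Y ℝ) (hF : ∀ x y, F x y ≠ 0) (f : X' → X) (g : Y' → Y) :
    signRank (F.submatrix f g) ≤ signRank F := by
  -- without `hF` the defining set may be empty, and then `signRank F = 0`
  have hne : {ρ | ∃ A : Matrix X Y ℝ, (∀ x y, 0 < A x y * F x y) ∧ A.rank = ρ}.Nonempty :=
    ⟨F.rank, F, fun x y => mul_self_pos.2 (hF x y), rfl⟩
  obtain ⟨A, hA, hAF⟩ := Nat.sInf_mem hne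
  calc signRank (F.submatrix f g) ≤ (A.submatrix f g).rank :=
        Nat.sInf_le ⟨A.submatrix f g, fun x y => hA (f x) (g y), rfl⟩
    _ ≤ A.rank := Matrix.rank_submatrix_le A f g
    _ = signRank F := hAF

section HammingWeight

variable {m n : ℕ}

theorem hamW_eq_sum (x : Fin n → Bool) : hamW x = ∑ i, (x i).toNat := by
  simp only [hamW, card_filter, Bool.toNat, cond_eq_ite]

theorem hamW_le (x : Fin n → Bool) : hamW x ≤ n :=
  (card_filter_le _ _).trans_eq (card_fin n)

@[simp]
theorem hamW_const (b : Bool) : hamW (fun _ : Fin n => b) = if b then n else 0 := by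
  cases b <;> simp [hamW_eq_sum]

@[simp]
theorem hamW_append (u : Fin m → Bool) (v : Fin n → Bool) :
    hamW (Fin.append u v) = hamW u + hamW v := by
  simp only [hamW_eq_sum, Fin.sum_univ_add, Fin.append_left, Fin.append_right]

theorem hamW_add_hamW_not (x : Fin n → Bool) : hamW x + hamW (fun i => !x i) = n := by
  simp only [hamW_eq_sum, ← sum_add_distrib]
  calc ∑ i, ((x i).toNat + (!x i).toNat) = ∑ _i : Fin n, 1 :=
        sum_congr rfl fun i _ => by cases x i <;> rfl
    _ = n := by simp

theorem hamW_bxor_add_two_mul_hamW_band (x y : Fin n → Bool) :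
    hamW (bxor x y) + 2 * hamW (band x y) = hamW x + hamW y := by
  simp only [hamW_eq_sum, bxor, band, mul_sum, ← sum_add_distrib]
  exact sum_congr rfl fun i _ => by cases x i <;> cases y i <;> rfl

@[simp]
theorem bxor_append (u u' : Fin m → Bool) (v v' : Fin n → Bool) :
    bxor (Fin.append u v) (Fin.append u' v') = Fin.append (bxor u u') (bxor v v') := by
  funext i
  induction i using Fin.addCases <;> simp [bxor]

@[simp]
theorem bxor_false_right (x : Fin n → Bool) : bxor x (fun _ => false) = x := by
  funext i
  simp [bxor]

@[simp]
theorem bxor_false_left (x : Fin n → Bool) : bxor (fun _ => false) x = x := by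
  funext i
  simp [bxor]

end HammingWeight

section Embedding

variable {c : ℕ} (a b m : ℕ)

def xorEmbedRow (x : Fin c → Bool) : Fin (c + c + c + a + b + m) → Bool :=
  Fin.append (Fin.append (Fin.append (Fin.append (Fin.append x (fun i => !x i))
    (fun _ => false)) (fun _ => true)) (fun _ => false)) (fun _ => false)

def xorEmbedCol (y : Fin c → Bool) : Fin (c + c + c + a + b + m) → Bool :=
  Fin.append (Fin.append (Fin.append (Fin.append (Fin.append y (fun _ => false))
    (fun i => !y i)) (fun _ => false)) (fun _ => true)) (fun _ => false)

theorem hamW_bxor_xorEmbed (x y : Fin c → Bool) :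
    hamW (bxor (xorEmbedRow a b m x) (xorEmbedCol a b m y)) =
      2 * c + a + b - 2 * hamW (band x y) := by
  have hxy := hamW_bxor_add_two_mul_hamW_band x y
  have hx := hamW_add_hamW_not x
  have hy := hamW_add_hamW_not y
  simp only [xorEmbedRow, xorEmbedCol, bxor_append, bxor_false_left, bxor_false_right,
    hamW_append, hamW_const, if_true, Bool.false_eq_true, if_false]
  omega

theorem signRank_band_le_signRank_bxor (φ : ℕ → ℝ)
    (hφ : ∀ i ≤ c + c + c + a + b + m, φ i ≠ 0) :
    signRank (fun x y : Fin c → Bool => φ (2 * c + a + b - 2 * hamW (band x y))) ≤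
      signRank (fun x y : Fin (c + c + c + a + b + m) → Bool => φ (hamW (bxor x y))) := by
  have hsub : (fun x y : Fin c → Bool => φ (2 * c + a + b - 2 * hamW (band x y))) =
      (Matrix.of fun x y : Fin (c + c + c + a + b + m) → Bool => φ (hamW (bxor x y))).submatrix
        (xorEmbedRow a b m) (xorEmbedCol a b m) := by
    ext x y
    simp [hamW_bxor_xorEmbed]
  rw [hsub]
  exact signRank_submatrix_le _ (fun x y => hφ _ (hamW_le _)) _ _

end Embedding

/-- The reduction step: with `k + c ≤ r`, `k + c ≤ t`, `r + t − k ≤ n − c` and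
`G(i) = D(r + t − 2(k + i))`, the sign-rank of the XOR matrix
`F(x,y) = D(|x ⊕ y|)` on `{0,1}^n` is at least the sign-rank of the AND matrix
`F'(x',y') = G(|x' ∧ y'|)` on `{0,1}^c`. -/
theorem signRank_and_le_signRank_xor (n c r t k : ℕ)
    (h1 : k + c ≤ r) (h2 : k + c ≤ t) (h3 : r + t - k ≤ n - c)
    (D : ℕ → ℤ) (hD : ∀ i ≤ n, D i = 1 ∨ D i = -1) :
    signRank (fun x' y' : Fin c → Bool =>
        (D (r + t - 2 * (k + hamW (band x' y'))) : ℝ)) ≤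
      signRank (fun x y : Fin n → Bool => (D (hamW (bxor x y)) : ℝ)) := by
  obtain ⟨m, rfl⟩ : ∃ m, n = c + c + c + (r - k - c) + (t - k - c) + m :=
    ⟨n - (c + c + c + (r - k - c) + (t - k - c)), by omega⟩
  have hG : (fun x' y' : Fin c → Bool => (D (r + t - 2 * (k + hamW (band x' y'))) : ℝ)) =
      fun x' y' => (D (2 * c + (r - k - c) + (t - k - c) - 2 * hamW (band x' y')) : ℝ) := by
    funext x' y'
    have := hamW_le (band x' y')
    congr 2
    omega
  rw [hG]
  refine signRank_band_le_signRank_bxor _ _ _ (fun i : ℕ => (D i : ℝ)) fun i hi => ?_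
  rcases hD i hi with h | h <;> simp [h]
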